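/- arXiv:2108.00880 — 2 statements merged into one kernel-verified Lean document; each statement's English description precedes it below -/
import Mathlib

section
/- Let S ⊆ Q_n be a nondegenerate n-dimensional simplex with Q_n ⊄ S, with basic Lagrange polynomials λ_1,…,λ_{n+1}. A vertex v of Q_n belongs to the j-th (n−1)-dimensional face of the simplex ξ(S)S — the face contained in the hyperplane {x ∈ ℝ^n : λ_j(x) = (1−ξ(S))/(n+1)} — if and only if −λ_j(v) = max_{1≤k≤n+1} max_{x ∈ ver(Q_n)} (−λ_k(x)). -/
open Set MeasureTheory Finset Metric

noncomputable section

/-- The unit cube `Q_n = [0,1]^n` in `ℝ^n`. -/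
def unitCube (n : ℕ) : Set (EuclideanSpace ℝ (Fin n)) :=
  {x | ∀ i, x i ∈ Set.Icc (0 : ℝ) 1}

/-- The set of vertices of the unit cube `Q_n`. -/
def cubeVertices (n : ℕ) : Set (EuclideanSpace ℝ (Fin n)) :=
  {x | ∀ i, x i = 0 ∨ x i = 1}

/-- The closed unit Euclidean ball `B_n` in `ℝ^n`. -/
def unitBall (n : ℕ) : Set (EuclideanSpace ℝ (Fin n)) :=
  Metric.closedBall 0 1

/-- Image of a set under the homothety with center `c` and ratio `σ`. -/
def homothet {n : ℕ} (c : EuclideanSpace ℝ (Fin n)) (σ : ℝ)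
    (S : Set (EuclideanSpace ℝ (Fin n))) : Set (EuclideanSpace ℝ (Fin n)) :=
  (fun x => c + σ • (x - c)) '' S

/-- The simplex with vertex set `v` (its convex hull). -/
def simplexSet {n : ℕ} (v : Fin (n + 1) → EuclideanSpace ℝ (Fin n)) :
    Set (EuclideanSpace ℝ (Fin n)) :=
  convexHull ℝ (Set.range v)

/-- The centroid (center of gravity) of the simplex with vertices `v`. -/
def simplexCentroid {n : ℕ} (v : Fin (n + 1) → EuclideanSpace ℝ (Fin n)) :
    EuclideanSpace ℝ (Fin n) :=
  Finset.univ.centroid ℝ v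

/-- `σS`: homothetic copy of the simplex `S` with center at its centroid and ratio `σ`. -/
def simplexHomothet {n : ℕ} (v : Fin (n + 1) → EuclideanSpace ℝ (Fin n)) (σ : ℝ) :
    Set (EuclideanSpace ℝ (Fin n)) :=
  homothet (simplexCentroid v) σ (simplexSet v)

/-- The absorption index `ξ(Ω;S)`: minimal `σ ≥ 1` with `Ω ⊆ σS`. -/
def xiInd {n : ℕ} (Ω : Set (EuclideanSpace ℝ (Fin n)))
    (v : Fin (n + 1) → EuclideanSpace ℝ (Fin n)) : ℝ :=
  sInf {σ : ℝ | 1 ≤ σ ∧ Ω ⊆ simplexHomothet v σ}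

/-- `α(Ω;S)`: minimal `σ > 0` such that `Ω` is contained in a translate of `σS`. -/
def alphaInd {n : ℕ} (Ω : Set (EuclideanSpace ℝ (Fin n)))
    (v : Fin (n + 1) → EuclideanSpace ℝ (Fin n)) : ℝ :=
  sInf {σ : ℝ | 0 < σ ∧ ∃ t : EuclideanSpace ℝ (Fin n),
    Ω ⊆ (fun x => t + x) '' simplexHomothet v σ}

/-- `lam` is the family of basic Lagrange polynomials of the simplex with vertices `v`:
affine maps with `lam j (v k) = δ_{jk}`. -/
def IsLagrangeBasis {n : ℕ} (v : Fin (n + 1) → EuclideanSpace ℝ (Fin n))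
    (lam : Fin (n + 1) → (EuclideanSpace ℝ (Fin n) →ᵃ[ℝ] ℝ)) : Prop :=
  ∀ j k, lam j (v k) = if j = k then (1 : ℝ) else 0

/-- The `i`-th axial diameter of a set: maximal length of a segment contained in it
and parallel to the `i`-th coordinate axis. -/
def axialDiameter {n : ℕ} (i : Fin n) (S : Set (EuclideanSpace ℝ (Fin n))) : ℝ :=
  sSup {t : ℝ | 0 ≤ t ∧ ∃ x, x ∈ S ∧ x + t • (EuclideanSpace.single i (1 : ℝ)) ∈ S}

/-- Norm of the interpolation projector with Lagrange basis `lam`, as an operator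
`C(Ω) → C(Ω)`: it equals `max_{x ∈ Ω} Σ_j |λ_j(x)|`. -/
def projNorm {n : ℕ} (Ω : Set (EuclideanSpace ℝ (Fin n)))
    (lam : Fin (n + 1) → (EuclideanSpace ℝ (Fin n) →ᵃ[ℝ] ℝ)) : ℝ :=
  sSup ((fun x => ∑ j, |lam j x|) '' Ω)

/-- `θ_n(Ω)`: the minimal norm of an interpolation projector with nodes in `Ω`. -/
def thetaMin (n : ℕ) (Ω : Set (EuclideanSpace ℝ (Fin n))) : ℝ :=
  sInf {t : ℝ | ∃ v : Fin (n + 1) → EuclideanSpace ℝ (Fin n),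
    ∃ lam : Fin (n + 1) → (EuclideanSpace ℝ (Fin n) →ᵃ[ℝ] ℝ),
      AffineIndependent ℝ v ∧ (∀ j, v j ∈ Ω) ∧ IsLagrangeBasis v lam ∧
      t = projNorm Ω lam}

/-- `ξ_n`: minimal absorption index of the unit cube by a contained nondegenerate simplex. -/
def xiMin (n : ℕ) : ℝ :=
  sInf {t : ℝ | ∃ v : Fin (n + 1) → EuclideanSpace ℝ (Fin n),
    AffineIndependent ℝ v ∧ simplexSet v ⊆ unitCube n ∧ t = xiInd (unitCube n) v}

/-- The standardized Legendre polynomial `χ_n` (Rodrigues formula). -/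
def legendreChi (n : ℕ) (t : ℝ) : ℝ :=
  (1 / (2 ^ n * (n.factorial : ℝ))) * iteratedDeriv n (fun s : ℝ => (s ^ 2 - 1) ^ n) t

/-- The inverse of `χ_n` on the half-axis `[1, +∞)`. -/
def legendreInv (n : ℕ) (y : ℝ) : ℝ :=
  Function.invFunOn (legendreChi n) (Set.Ici 1) y

/-- `ν_n`: the maximal volume of an `n`-dimensional simplex contained in `Q_n`. -/
def maxSimplexVol (n : ℕ) : ℝ :=
  sSup {t : ℝ | ∃ v : Fin (n + 1) → EuclideanSpace ℝ (Fin n),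
    AffineIndependent ℝ v ∧ simplexSet v ⊆ unitCube n ∧
    t = (volume (simplexSet v)).toReal}

/-- `h_n`: the maximal determinant of an `n×n` matrix with entries in `{0,1}`. -/
def maxDet01 (n : ℕ) : ℝ :=
  sSup {d : ℝ | ∃ M : Matrix (Fin n) (Fin n) ℝ,
    (∀ i j, M i j = 0 ∨ M i j = 1) ∧ d = M.det}

/-- `σ_n`: the volume of a regular `n`-dimensional simplex inscribed into `B_n`. -/
def regSimplexVol (n : ℕ) : ℝ :=
  sSup {t : ℝ | ∃ v : Fin (n + 1) → EuclideanSpace ℝ (Fin n),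
    AffineIndependent ℝ v ∧ (∃ e : ℝ, ∀ j k, j ≠ k → dist (v j) (v k) = e) ∧
    (∀ j, ‖v j‖ = 1) ∧ t = (volume (simplexSet v)).toReal}

end

/-!
In the barycentric coordinates `λ_k` of `S`, the centroid has all coordinates `1/(n+1)`, so for
`σ > 0` the simplex `σS` is `{x | ∀ k, (1 - σ)/(n+1) ≤ λ_k x}`. An affine function attains its
minimum over `Q_n` at a vertex, hence `Q_n ⊆ σS` iff `σ ≥ 1 + (n+1) M`, where
`M = max_k max_{x ∈ ver Q_n} (-λ_k x)`. As `Q_n ⊄ S` forces `M > 0`, this gives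
`ξ(S) = 1 + (n+1) M`, and the hyperplane of the `j`-th face is `λ_j = -M`. A vertex `w` on that
hyperplane lies in `ξ(S)S` automatically, because `-λ_k(w) ≤ M` for every `k`.
-/

section AffineBasis

variable {R ι V P : Type*}

theorem AffineBasis.eq_coord_of_apply_eq [Ring R] [AddCommGroup V] [Module R V] [AddTorsor V P]
    [DecidableEq ι] (b : AffineBasis ι R P) {f : P →ᵃ[R] R} {j : ι}
    (hf : ∀ k, f (b k) = if j = k then 1 else 0) : f = b.coord j :=
  AffineMap.ext_on b.tot <| by
    rintro _ ⟨k, rfl⟩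
    rw [hf, b.coord_apply]

noncomputable def AffineIndependent.toAffineBasis [DivisionRing R] [AddCommGroup V] [Module R V]
    [AddTorsor V P] [Fintype ι] [FiniteDimensional R V] {v : ι → P} (hv : AffineIndependent R v)
    (hcard : Fintype.card ι = Module.finrank R V + 1) : AffineBasis ι R P :=
  ⟨v, hv, hv.affineSpan_eq_top_iff_card_eq_finrank_add_one.mpr hcard⟩

theorem AffineBasis.mem_image_homothety_convexHull_iff [Field R] [LinearOrder R]
    [IsStrictOrderedRing R] [AddCommGroup V] [Module R V] (b : AffineBasis ι R V) {σ : R}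
    (hσ : 0 < σ) (c z : V) :
    z ∈ AffineMap.homothety c σ '' convexHull R (range b) ↔
      ∀ i, (1 - σ) * b.coord i c ≤ b.coord i z := by
  have coord_homothety (r : R) (x : V) (i : ι) :
      b.coord i (AffineMap.homothety c r x) = (1 - r) * b.coord i c + r * b.coord i x := by
    rw [AffineMap.homothety_eq_lineMap, AffineMap.apply_lineMap, AffineMap.lineMap_apply_ring]
  simp only [b.convexHull_eq_nonneg_coord, Set.mem_image, Set.mem_ofPred_eq]
  constructor
  · rintro ⟨x, hx, rfl⟩ i
    rw [coord_homothety]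
    nlinarith [hx i]
  · intro h
    refine ⟨AffineMap.homothety c σ⁻¹ z, fun i => ?_, ?_⟩
    · rw [coord_homothety]
      convert mul_nonneg (inv_nonneg.2 hσ.le) (sub_nonneg.2 (h i)) using 1
      field_simp
      ring
    · rw [← AffineMap.homothety_mul_apply, mul_inv_cancel₀ hσ.ne', AffineMap.homothety_one]
      rfl

end AffineBasis

section Simplex

variable {n : ℕ} {v : Fin (n + 1) → EuclideanSpace ℝ (Fin n)}
  {lam : Fin (n + 1) → (EuclideanSpace ℝ (Fin n) →ᵃ[ℝ] ℝ)}

theorem IsLagrangeBasis.eq_coord (hv : AffineIndependent ℝ v) (hlam : IsLagrangeBasis v lam)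
    (j : Fin (n + 1)) : lam j = (hv.toAffineBasis (by simp)).coord j :=
  AffineBasis.eq_coord_of_apply_eq _ (hlam j)

theorem simplexHomothet_eq_image_homothety (v : Fin (n + 1) → EuclideanSpace ℝ (Fin n)) (σ : ℝ) :
    simplexHomothet v σ = AffineMap.homothety (simplexCentroid v) σ '' simplexSet v := by
  refine congrArg (· '' simplexSet v) (funext fun x => ?_)
  rw [AffineMap.homothety_apply, vsub_eq_sub, vadd_eq_add, add_comm]

theorem simplexHomothet_one (v : Fin (n + 1) → EuclideanSpace ℝ (Fin n)) :
    simplexHomothet v 1 = simplexSet v := by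
  rw [simplexHomothet_eq_image_homothety, AffineMap.homothety_one, AffineMap.coe_id, Set.image_id]

theorem mem_simplexHomothet_iff (hv : AffineIndependent ℝ v) (hlam : IsLagrangeBasis v lam)
    {σ : ℝ} (hσ : 0 < σ) (z : EuclideanSpace ℝ (Fin n)) :
    z ∈ simplexHomothet v σ ↔ ∀ k, (1 - σ) / ((n : ℝ) + 1) ≤ lam k z := by
  set b := hv.toAffineBasis (by simp)
  have hcentroid : simplexCentroid v = Finset.univ.centroid ℝ b := rfl
  rw [simplexHomothet_eq_image_homothety, simplexSet, hcentroid]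
  refine (b.mem_image_homothety_convexHull_iff hσ _ z).trans (forall_congr' fun k => ?_)
  rw [b.coord_apply_centroid (Finset.mem_univ k), hlam.eq_coord hv]
  simp only [Finset.card_univ, Fintype.card_fin, Nat.cast_succ, div_eq_mul_inv]
  rfl

end Simplex

section Cube

variable {n : ℕ}

theorem cubeVertices_subset_unitCube : cubeVertices n ⊆ unitCube n := by
  intro x hx i
  rcases hx i with h | h <;> simp [h]

theorem zero_mem_cubeVertices : (0 : EuclideanSpace ℝ (Fin n)) ∈ cubeVertices n :=
  fun _ => Or.inl rfl

theorem cubeVertices_finite : (cubeVertices n).Finite := by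
  refine ((Set.Finite.pi fun _ => ({0, 1} : Set ℝ).toFinite).image (WithLp.toLp 2)).subset ?_
  exact fun x hx => ⟨x.ofLp, fun i _ => hx i, rfl⟩

theorem EuclideanSpace.affineMap_apply_eq_sum (f : EuclideanSpace ℝ (Fin n) →ᵃ[ℝ] ℝ)
    (x : EuclideanSpace ℝ (Fin n)) :
    f x = ∑ i, x i * f.linear (EuclideanSpace.single i 1) + f 0 := by
  have hdecomp : f x = f.linear x + f 0 := by simpa using f.map_vadd 0 x
  conv_lhs => rw [hdecomp, ← (EuclideanSpace.basisFun (Fin n) ℝ).sum_repr x]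
  simp [map_sum]

theorem exists_mem_cubeVertices_le (f : EuclideanSpace ℝ (Fin n) →ᵃ[ℝ] ℝ)
    {x : EuclideanSpace ℝ (Fin n)} (hx : x ∈ unitCube n) :
    ∃ w ∈ cubeVertices n, f w ≤ f x := by
  set g : Fin n → ℝ := fun i => f.linear (EuclideanSpace.single i 1)
  refine ⟨WithLp.toLp 2 fun i => if g i ≤ 0 then 1 else 0, fun i => by
    by_cases h : g i ≤ 0 <;> simp [h], ?_⟩
  rw [EuclideanSpace.affineMap_apply_eq_sum f, EuclideanSpace.affineMap_apply_eq_sum f x,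
    add_le_add_iff_right]
  refine Finset.sum_le_sum fun i _ => ?_
  by_cases h : g i ≤ 0
  · simpa [h] using mul_le_mul_of_nonpos_right (hx i).2 h
  · simpa [h] using mul_nonneg (hx i).1 (le_of_not_ge h)

end Cube

section Absorption

variable {n : ℕ} {v : Fin (n + 1) → EuclideanSpace ℝ (Fin n)}
  {lam : Fin (n + 1) → (EuclideanSpace ℝ (Fin n) →ᵃ[ℝ] ℝ)}

noncomputable def maxNegLagrangeOnVertices
    (lam : Fin (n + 1) → (EuclideanSpace ℝ (Fin n) →ᵃ[ℝ] ℝ)) : ℝ :=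
  sSup {y : ℝ | ∃ k : Fin (n + 1), ∃ x ∈ cubeVertices n, y = -(lam k x)}

theorem bddAbove_neg_lagrange_cubeVertices
    (lam : Fin (n + 1) → (EuclideanSpace ℝ (Fin n) →ᵃ[ℝ] ℝ)) :
    BddAbove {y : ℝ | ∃ k : Fin (n + 1), ∃ x ∈ cubeVertices n, y = -(lam k x)} := by
  refine (Set.finite_iUnion fun k =>
    cubeVertices_finite.image fun x => -(lam k x)).bddAbove.mono ?_
  rintro _ ⟨k, x, hx, rfl⟩
  exact Set.mem_iUnion.2 ⟨k, x, hx, rfl⟩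

theorem neg_lagrange_le_maxNegLagrangeOnVertices
    (lam : Fin (n + 1) → (EuclideanSpace ℝ (Fin n) →ᵃ[ℝ] ℝ)) (k : Fin (n + 1))
    {x : EuclideanSpace ℝ (Fin n)} (hx : x ∈ cubeVertices n) :
    -(lam k x) ≤ maxNegLagrangeOnVertices lam :=
  le_csSup (bddAbove_neg_lagrange_cubeVertices lam) ⟨k, x, hx, rfl⟩

theorem maxNegLagrangeOnVertices_le_iff
    (lam : Fin (n + 1) → (EuclideanSpace ℝ (Fin n) →ᵃ[ℝ] ℝ)) (t : ℝ) :
    maxNegLagrangeOnVertices lam ≤ t ↔ ∀ k, ∀ x ∈ unitCube n, -(lam k x) ≤ t := by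
  rw [maxNegLagrangeOnVertices, csSup_le_iff (bddAbove_neg_lagrange_cubeVertices lam)
    ⟨_, 0, 0, zero_mem_cubeVertices, rfl⟩]
  constructor
  · intro h k x hx
    obtain ⟨w, hw, hwx⟩ := exists_mem_cubeVertices_le (lam k) hx
    linarith [h _ ⟨k, w, hw, rfl⟩]
  · rintro h _ ⟨k, x, hx, rfl⟩
    exact h k x (cubeVertices_subset_unitCube hx)

theorem unitCube_subset_simplexHomothet_iff (hv : AffineIndependent ℝ v)
    (hlam : IsLagrangeBasis v lam) {σ : ℝ} (hσ : 0 < σ) :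
    unitCube n ⊆ simplexHomothet v σ ↔
      1 + ((n : ℝ) + 1) * maxNegLagrangeOnVertices lam ≤ σ := by
  have hrescale : 1 + ((n : ℝ) + 1) * maxNegLagrangeOnVertices lam ≤ σ ↔
      maxNegLagrangeOnVertices lam ≤ -((1 - σ) / ((n : ℝ) + 1)) := by
    rw [← neg_div, neg_sub, le_div_iff₀ (by positivity)]
    constructor <;> intro h <;> linarith
  simp only [hrescale, maxNegLagrangeOnVertices_le_iff, neg_le_neg_iff, Set.subset_def,
    mem_simplexHomothet_iff hv hlam hσ]
  exact ⟨fun h k x hx => h x hx k, fun h x hx k => h k x hx⟩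

theorem maxNegLagrangeOnVertices_pos (hv : AffineIndependent ℝ v) (hlam : IsLagrangeBasis v lam)
    (hns : ¬ unitCube n ⊆ simplexSet v) : 0 < maxNegLagrangeOnVertices lam := by
  rw [← simplexHomothet_one, unitCube_subset_simplexHomothet_iff hv hlam one_pos] at hns
  have hn : (0 : ℝ) < (n : ℝ) + 1 := by positivity
  by_contra! h
  exact hns (by nlinarith)

theorem xiInd_unitCube_eq (hv : AffineIndependent ℝ v) (hlam : IsLagrangeBasis v lam)
    (hpos : 0 < maxNegLagrangeOnVertices lam) :
    xiInd (unitCube n) v = 1 + ((n : ℝ) + 1) * maxNegLagrangeOnVertices lam := by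
  have hσ : 1 ≤ 1 + ((n : ℝ) + 1) * maxNegLagrangeOnVertices lam := by
    have : (0 : ℝ) < (n : ℝ) + 1 := by positivity
    nlinarith
  rw [xiInd, ← csInf_Ici (a := 1 + _)]
  congr 1
  ext σ
  constructor
  · rintro ⟨h1, hsub⟩
    exact (unitCube_subset_simplexHomothet_iff hv hlam (by linarith)).1 hsub
  · intro h
    have h1 : 1 ≤ σ := hσ.trans h
    exact ⟨h1, (unitCube_subset_simplexHomothet_iff hv hlam (by linarith)).2 h⟩

end Absorption

theorem vertex_on_face_iff_max_general (n : ℕ)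
    (v : Fin (n + 1) → EuclideanSpace ℝ (Fin n)) (hv : AffineIndependent ℝ v)
    (hns : ¬ unitCube n ⊆ simplexSet v)
    (lam : Fin (n + 1) → (EuclideanSpace ℝ (Fin n) →ᵃ[ℝ] ℝ))
    (hlam : IsLagrangeBasis v lam)
    (w : EuclideanSpace ℝ (Fin n)) (hw : w ∈ cubeVertices n) (j : Fin (n + 1)) :
    (w ∈ simplexHomothet v (xiInd (unitCube n) v) ∧
        lam j w = (1 - xiInd (unitCube n) v) / ((n : ℝ) + 1)) ↔
      -(lam j w) =
        sSup {y : ℝ | ∃ k : Fin (n + 1), ∃ x ∈ cubeVertices n, y = -(lam k x)} := by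
  change _ ↔ -(lam j w) = maxNegLagrangeOnVertices lam
  set M := maxNegLagrangeOnVertices lam
  have hM : 0 < M := maxNegLagrangeOnVertices_pos hv hlam hns
  have hξ : xiInd (unitCube n) v = 1 + ((n : ℝ) + 1) * M := xiInd_unitCube_eq hv hlam hM
  have hface : (1 - xiInd (unitCube n) v) / ((n : ℝ) + 1) = -M := by
    rw [hξ]
    field_simp
    ring
  rw [mem_simplexHomothet_iff hv hlam (by rw [hξ]; positivity), hface]
  have hwM (k : Fin (n + 1)) : -(lam k w) ≤ M := neg_lagrange_le_maxNegLagrangeOnVertices lam k hw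
  constructor
  · rintro ⟨-, hj⟩
    rw [hj, neg_neg]
  · intro h
    exact ⟨fun k => by linarith [hwM k], by linarith⟩

/-- Theorem 7.1: For `S ⊆ Q_n` with `Q_n ⊄ S`, a vertex `w` of `Q_n`
belongs to the `j`-th `(n−1)`-face of `ξ(S)S` (the face lying in the hyperplane
`λ_j(x) = (1−ξ(S))/(n+1)`) iff `−λ_j(w) = max_{k} max_{x ∈ ver Q_n}(−λ_k(x))`. -/
theorem vertex_on_face_iff_max (n : ℕ) (hn : 0 < n)
    (v : Fin (n + 1) → EuclideanSpace ℝ (Fin n)) (hv : AffineIndependent ℝ v)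
    (hS : simplexSet v ⊆ unitCube n) (hns : ¬ unitCube n ⊆ simplexSet v)
    (lam : Fin (n + 1) → (EuclideanSpace ℝ (Fin n) →ᵃ[ℝ] ℝ))
    (hlam : IsLagrangeBasis v lam)
    (w : EuclideanSpace ℝ (Fin n)) (hw : w ∈ cubeVertices n) (j : Fin (n + 1)) :
    (w ∈ simplexHomothet v (xiInd (unitCube n) v) ∧
        lam j w = (1 - xiInd (unitCube n) v) / ((n : ℝ) + 1)) ↔
      -(lam j w) =
        sSup {y : ℝ | ∃ k : Fin (n + 1), ∃ x ∈ cubeVertices n, y = -(lam k x)} :=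
  vertex_on_face_iff_max_general n v hv hns lam hlam w hw j
end

section
/- If S is a nondegenerate n-dimensional simplex contained in the closed unit Euclidean ball B_n, then α(B_n;S) ≥ n, and equality α(B_n;S) = n holds if and only if S is a regular simplex inscribed into B_n (all edges of S have equal length and all vertices of S lie on the unit sphere). -/
open Set MeasureTheory Finset Metric

/-!
Write `λ_j` for the barycentric coordinates of `S` and `∇λ_j` for their gradients. The translate
`u + σS` contains `B_n` iff `‖∇λ_j‖ ≤ σ λ_j(-u/σ)` for every `j`; as `∑ λ_j = 1`, this shows
`α(B_n;S) = ∑ ‖∇λ_j‖`. On the other hand `⟪∇λ_j, v_j⟫ = 1 - λ_j(0)` sums to `n`, and each term is at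
most `‖∇λ_j‖` when `‖v_j‖ ≤ 1`. So `α(B_n;S) = n` iff every `∇λ_j` is a positive multiple of `v_j`
and `‖v_j‖ = 1`. Then `⟪v_j, v_k⟫ = 1 - ‖∇λ_j‖⁻¹` for `j ≠ k`, and its symmetry makes all the
`‖∇λ_j‖`, hence all edges, equal. Conversely, for a regular inscribed simplex with edge `e` one
checks `∇λ_j = (2 / e²) v_j` on the edge vectors `v_k - v_l`, which span `ℝⁿ`.
-/

open scoped RealInnerProductSpace Pointwise

section

variable {E : Type*} [NormedAddCommGroup E] [InnerProductSpace ℝ E]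

theorem real_inner_eq_norm_iff_of_norm_le_one {g x : E} (hx : ‖x‖ ≤ 1) (hg : g ≠ 0) :
    ⟪g, x⟫ = ‖g‖ ↔ g = ‖g‖ • x := by
  have hg' : 0 < ‖g‖ := norm_pos_iff.2 hg
  constructor
  · intro h
    have hx1 : ‖x‖ = 1 := by
      have := real_inner_le_norm g x
      nlinarith
    have := inner_eq_norm_mul_iff_real.1 (by rw [h, hx1, mul_one])
    rwa [hx1, one_smul] at this
  · intro h
    have hx1 : ‖x‖ = 1 := by
      have := congrArg norm h
      rw [norm_smul, norm_norm] at this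
      nlinarith
    nth_rw 1 [h]
    rw [real_inner_smul_left, real_inner_self_eq_norm_sq, hx1, one_pow, mul_one]

theorem forall_norm_le_one_nonneg_add_inner_iff (g : E) (a : ℝ) :
    (∀ x : E, ‖x‖ ≤ 1 → 0 ≤ a + ⟪g, x⟫) ↔ ‖g‖ ≤ a := by
  constructor
  · intro h
    have := h (-‖g‖⁻¹ • g) <| by
      rw [norm_smul, norm_neg, norm_inv, norm_norm]
      exact inv_mul_le_one_of_le₀ le_rfl (norm_nonneg g)
    rw [real_inner_smul_right, real_inner_self_eq_norm_sq] at this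
    rcases eq_or_ne ‖g‖ 0 with h0 | h0
    · rw [h0] at this ⊢; simpa using this
    · field_simp at this
      linarith
  · intro h x hx
    have := neg_le_of_abs_le (abs_real_inner_le_norm g x)
    nlinarith [norm_nonneg g]

namespace AffineBasis

variable {ι : Type*} (b : AffineBasis ι ℝ E)

theorem eq_zero_of_forall_inner_sub_eq_zero {w : E} (hw : ∀ k l, ⟪w, b k - b l⟫ = 0) :
    w = 0 := by
  have hspan : vectorSpan ℝ (Set.range b) ≤ LinearMap.ker (innerₛₗ ℝ w) := by
    rw [vectorSpan_def]
    refine Submodule.span_le.2 ?_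
    rintro _ ⟨_, ⟨k, rfl⟩, _, ⟨l, rfl⟩, rfl⟩
    exact hw k l
  rw [AffineSubspace.vectorSpan_eq_top_of_affineSpan_eq_top ℝ E E b.tot, top_le_iff] at hspan
  have hww : ⟪w, w⟫ = 0 := by
    simpa using (LinearMap.ker_eq_top.1 hspan ▸ rfl : innerₛₗ ℝ w w = 0)
  exact inner_self_eq_zero.1 hww

variable [FiniteDimensional ℝ E]

noncomputable def coordGrad (j : ι) : E :=
  (InnerProductSpace.toDual ℝ E).symm (LinearMap.toContinuousLinearMap (b.coord j).linear)

theorem coord_add (j : ι) (p u : E) : b.coord j (p + u) = b.coord j p + ⟪b.coordGrad j, u⟫ := by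
  rw [coordGrad, InnerProductSpace.toDual_symm_apply, LinearMap.coe_toContinuousLinearMap',
    add_comm p, ← vadd_eq_add, AffineMap.map_vadd, vadd_eq_add, add_comm]

theorem inner_coordGrad_sub (j : ι) (x y : E) :
    ⟪b.coordGrad j, x - y⟫ = b.coord j x - b.coord j y := by
  rw [← add_sub_cancel y x, b.coord_add, add_sub_cancel, add_sub_cancel_left]

theorem eq_coordGrad_of_forall_inner_sub {w : E} {j : ι}
    (hw : ∀ k l, ⟪w, b k - b l⟫ = b.coord j (b k) - b.coord j (b l)) : w = b.coordGrad j :=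
  sub_eq_zero.1 <| b.eq_zero_of_forall_inner_sub_eq_zero fun k l => by
    rw [inner_sub_left, hw, inner_coordGrad_sub, sub_self]

theorem coordGrad_ne_zero [Nontrivial ι] (j : ι) : b.coordGrad j ≠ 0 := by
  obtain ⟨k, hk⟩ := exists_ne j
  intro h
  have := b.inner_coordGrad_sub j (b j) (b k)
  rw [h, inner_zero_left, b.coord_apply_eq, b.coord_apply_ne hk.symm] at this
  norm_num at this

theorem inner_coordGrad_self_le_norm {j : ι} (hj : ‖b j‖ ≤ 1) :
    ⟪b.coordGrad j, b j⟫ ≤ ‖b.coordGrad j‖ :=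
  (real_inner_le_norm _ _).trans (mul_le_of_le_one_right (norm_nonneg _) hj)

theorem sum_inner_coordGrad_self [Fintype ι] : ∑ j, ⟪b.coordGrad j, b j⟫ = Fintype.card ι - 1 := by
  have h : ∀ j, ⟪b.coordGrad j, b j⟫ = 1 - b.coord j 0 := fun j => by
    rw [← sub_zero (b j), inner_coordGrad_sub, b.coord_apply_eq]
  simp only [h, Finset.sum_sub_distrib, b.sum_coord_apply_eq_one, Finset.sum_const,
    Finset.card_univ, nsmul_eq_mul, mul_one]

theorem closedBall_subset_vadd_smul_convexHull_iff {σ : ℝ} (hσ : 0 < σ) (u : E) :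
    closedBall (0 : E) 1 ⊆ u +ᵥ σ • convexHull ℝ (Set.range b) ↔
      ∀ j, ‖b.coordGrad j‖ ≤ σ * b.coord j (-σ⁻¹ • u) := by
  have hmem : ∀ x, x ∈ u +ᵥ σ • convexHull ℝ (Set.range b) ↔
      ∀ j, 0 ≤ σ * b.coord j (-σ⁻¹ • u) + ⟪b.coordGrad j, x⟫ := by
    intro x
    rw [Set.mem_vadd_set_iff_neg_vadd_mem, Set.mem_smul_set_iff_inv_smul_mem₀ hσ.ne',
      b.convexHull_eq_nonneg_coord]
    refine forall_congr' fun j => ?_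
    rw [vadd_eq_add, smul_add, smul_neg, ← neg_smul, b.coord_add, real_inner_smul_right,
      ← mul_nonneg_iff_of_pos_left hσ, mul_add, ← mul_assoc, mul_inv_cancel₀ hσ.ne', one_mul]
  simp only [Set.subset_def, mem_closedBall_zero_iff, hmem]
  exact ⟨fun h j => (forall_norm_le_one_nonneg_add_inner_iff _ _).1 fun x hx => h x hx j,
    fun h x hx j => (forall_norm_le_one_nonneg_add_inner_iff _ _).2 (h j) x hx⟩

variable {b}

theorem norm_eq_one_of_coordGrad_eq_smul [Nontrivial ι] {j : ι}
    (hj : b.coordGrad j = ‖b.coordGrad j‖ • b j) : ‖b j‖ = 1 := by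
  have hg := norm_pos_iff.2 (b.coordGrad_ne_zero j)
  have := congrArg norm hj
  rw [norm_smul, norm_norm] at this
  nlinarith

theorem dist_eq_of_coordGrad_eq_smul [Nontrivial ι]
    (h : ∀ j, b.coordGrad j = ‖b.coordGrad j‖ • b j) :
    ∃ e, ∀ j k, j ≠ k → dist (b j) (b k) = e := by
  have hunit j := norm_eq_one_of_coordGrad_eq_smul (h j)
  have hinner : ∀ j k, j ≠ k → ⟪b j, b k⟫ = 1 - ‖b.coordGrad j‖⁻¹ := by
    intro j k hjk
    have hg := norm_ne_zero_iff.2 (b.coordGrad_ne_zero j)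
    have := b.inner_coordGrad_sub j (b j) (b k)
    rw [b.coord_apply_eq, b.coord_apply_ne hjk, h j, real_inner_smul_left, inner_sub_right,
      real_inner_self_eq_norm_sq, hunit] at this
    field_simp
    linarith
  have hgrad : ∀ j k, ‖b.coordGrad j‖ = ‖b.coordGrad k‖ := by
    intro j k
    rcases eq_or_ne j k with rfl | hjk
    · rfl
    · have := hinner j k hjk
      rw [real_inner_comm, hinner k j hjk.symm] at this
      exact inv_inj.1 (by linarith)
  obtain ⟨j₀⟩ := ‹Nontrivial ι›.to_nonempty
  refine ⟨√(2 * ‖b.coordGrad j₀‖⁻¹), fun j k hjk => ?_⟩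
  rw [← hgrad j, ← Real.sqrt_sq dist_nonneg, dist_eq_norm, norm_sub_sq_real, hunit, hunit,
    hinner j k hjk]
  ring_nf

theorem coordGrad_eq_smul_of_dist_eq [Nontrivial ι] {e : ℝ}
    (he : ∀ j k, j ≠ k → dist (b j) (b k) = e) (hunit : ∀ j, ‖b j‖ = 1) (j : ι) :
    b.coordGrad j = ‖b.coordGrad j‖ • b j := by
  have hinner : ∀ j k, ⟪b j, b k⟫ = 1 - e ^ 2 / 2 * (1 - b.coord j (b k)) := by
    intro j k
    rcases eq_or_ne j k with rfl | hjk
    · rw [real_inner_self_eq_norm_sq, hunit, b.coord_apply_eq]; ring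
    · have := norm_sub_sq_real (b j) (b k)
      rw [← dist_eq_norm, he j k hjk, hunit, hunit] at this
      rw [b.coord_apply_ne hjk]
      linarith
  have he0 : e ≠ 0 := by
    obtain ⟨k, hk⟩ := exists_ne j
    rw [← he j k hk.symm]
    exact dist_ne_zero.2 (b.ind.injective.ne hk.symm)
  have hgrad : b.coordGrad j = (2 / e ^ 2) • b j := by
    refine (b.eq_coordGrad_of_forall_inner_sub fun k l => ?_).symm
    rw [real_inner_smul_left, inner_sub_right, hinner, hinner]
    field_simp
    ring
  rw [hgrad, norm_smul, hunit, mul_one, Real.norm_of_nonneg (by positivity)]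

section Fintype

variable [Fintype ι]

theorem card_sub_one_le_sum_norm_coordGrad (hb : ∀ j, ‖b j‖ ≤ 1) :
    (Fintype.card ι : ℝ) - 1 ≤ ∑ j, ‖b.coordGrad j‖ :=
  b.sum_inner_coordGrad_self ▸ Finset.sum_le_sum fun j _ => b.inner_coordGrad_self_le_norm (hb j)

theorem sum_norm_coordGrad_eq_card_sub_one_iff [Nontrivial ι] (hb : ∀ j, ‖b j‖ ≤ 1) :
    ∑ j, ‖b.coordGrad j‖ = Fintype.card ι - 1 ↔ ∀ j, b.coordGrad j = ‖b.coordGrad j‖ • b j := by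
  rw [← b.sum_inner_coordGrad_self, eq_comm,
    Finset.sum_eq_sum_iff_of_le fun j _ => b.inner_coordGrad_self_le_norm (hb j)]
  simp only [Finset.mem_univ, true_implies,
    real_inner_eq_norm_iff_of_norm_le_one (hb _) (b.coordGrad_ne_zero _)]

theorem exists_closedBall_subset_vadd_smul_convexHull_iff {σ : ℝ} (hσ : 0 < σ) :
    (∃ u : E, closedBall (0 : E) 1 ⊆ u +ᵥ σ • convexHull ℝ (Set.range b)) ↔
      ∑ j, ‖b.coordGrad j‖ ≤ σ := by
  simp_rw [b.closedBall_subset_vadd_smul_convexHull_iff hσ]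
  constructor
  · rintro ⟨u, hu⟩
    calc ∑ j, ‖b.coordGrad j‖ ≤ ∑ j, σ * b.coord j (-σ⁻¹ • u) := Finset.sum_le_sum fun j _ => hu j
      _ = σ := by rw [← Finset.mul_sum, b.sum_coord_apply_eq_one, mul_one]
  · intro hG
    have hcard : (Fintype.card ι : ℝ) ≠ 0 := by
      have := b.nonempty
      positivity
    -- spread the slack `σ - ∑ ‖∇λ_j‖` evenly over the barycentric coordinates
    set slack := (σ - ∑ k, ‖b.coordGrad k‖) / Fintype.card ι
    set w : ι → ℝ := fun j => (‖b.coordGrad j‖ + slack) / σ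
    have hw : ∑ j, w j = 1 := by
      rw [← Finset.sum_div, Finset.sum_add_distrib, Finset.sum_const, Finset.card_univ,
        nsmul_eq_mul, mul_div_cancel₀ _ hcard, add_sub_cancel, div_self hσ.ne']
    refine ⟨-σ • Finset.univ.affineCombination ℝ b w, fun j => ?_⟩
    rw [smul_smul, neg_mul_neg, inv_mul_cancel₀ hσ.ne', one_smul,
      b.coord_apply_combination_of_mem (Finset.mem_univ j) hw, mul_div_cancel₀ _ hσ.ne']
    have : 0 ≤ slack := div_nonneg (sub_nonneg.2 hG) (Nat.cast_nonneg _)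
    linarith

theorem sum_norm_coordGrad_eq_card_sub_one_iff_regular [Nontrivial ι] (hb : ∀ j, ‖b j‖ ≤ 1) :
    ∑ j, ‖b.coordGrad j‖ = Fintype.card ι - 1 ↔
      (∃ e, ∀ j k, j ≠ k → dist (b j) (b k) = e) ∧ ∀ j, ‖b j‖ = 1 := by
  rw [sum_norm_coordGrad_eq_card_sub_one_iff hb]
  exact ⟨fun h => ⟨dist_eq_of_coordGrad_eq_smul h, fun j => norm_eq_one_of_coordGrad_eq_smul (h j)⟩,
    fun ⟨⟨_, he⟩, hunit⟩ => coordGrad_eq_smul_of_dist_eq he hunit⟩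

end Fintype

end AffineBasis

end

def simplexBasis {n : ℕ} {v : Fin (n + 1) → EuclideanSpace ℝ (Fin n)}
    (hv : AffineIndependent ℝ v) : AffineBasis (Fin (n + 1)) ℝ (EuclideanSpace ℝ (Fin n)) :=
  ⟨v, hv, hv.affineSpan_eq_top_iff_card_eq_finrank_add_one.2 (by simp)⟩

@[simp]
theorem coe_simplexBasis {n : ℕ} {v : Fin (n + 1) → EuclideanSpace ℝ (Fin n)}
    (hv : AffineIndependent ℝ v) : ⇑(simplexBasis hv) = v :=
  rfl

theorem image_add_simplexHomothet {n : ℕ} (v : Fin (n + 1) → EuclideanSpace ℝ (Fin n))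
    (σ : ℝ) (t : EuclideanSpace ℝ (Fin n)) :
    (fun x => t + x) '' simplexHomothet v σ =
      (t + simplexCentroid v - σ • simplexCentroid v) +ᵥ σ • simplexSet v := by
  rw [simplexHomothet, homothet, Set.image_image, ← Set.image_smul, ← Set.image_vadd,
    Set.image_image]
  congr 1
  funext x
  rw [vadd_eq_add, smul_sub]
  abel

theorem exists_image_add_subset_simplexHomothet_iff {n : ℕ} (Ω : Set (EuclideanSpace ℝ (Fin n)))
    (v : Fin (n + 1) → EuclideanSpace ℝ (Fin n)) (σ : ℝ) :
    (∃ t, Ω ⊆ (fun x => t + x) '' simplexHomothet v σ) ↔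
      ∃ u : EuclideanSpace ℝ (Fin n), Ω ⊆ u +ᵥ σ • simplexSet v := by
  simp_rw [image_add_simplexHomothet]
  refine ⟨fun ⟨t, ht⟩ => ⟨_, ht⟩,
    fun ⟨u, hu⟩ => ⟨u + σ • simplexCentroid v - simplexCentroid v, ?_⟩⟩
  convert hu using 2
  abel

theorem alphaInd_unitBall_eq {n : ℕ} (hn : 0 < n) {v : Fin (n + 1) → EuclideanSpace ℝ (Fin n)}
    (hv : AffineIndependent ℝ v) :
    alphaInd (unitBall n) v = ∑ j, ‖(simplexBasis hv).coordGrad j‖ := by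
  have : Nontrivial (Fin (n + 1)) := Fin.nontrivial_iff_two_le.2 (by omega)
  set b := simplexBasis hv
  have hG : 0 < ∑ j, ‖b.coordGrad j‖ :=
    Finset.sum_pos (fun j _ => norm_pos_iff.2 (b.coordGrad_ne_zero j)) Finset.univ_nonempty
  have hadm : {σ : ℝ | 0 < σ ∧ ∃ t, unitBall n ⊆ (fun x => t + x) '' simplexHomothet v σ} =
      Set.Ici (∑ j, ‖b.coordGrad j‖) := by
    ext σ
    simp only [Set.mem_ofPred_eq, Set.mem_Ici, exists_image_add_subset_simplexHomothet_iff]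
    refine ⟨fun ⟨hσ, h⟩ => (b.exists_closedBall_subset_vadd_smul_convexHull_iff hσ).1 h,
      fun h => ⟨hG.trans_le h, ?_⟩⟩
    exact (b.exists_closedBall_subset_vadd_smul_convexHull_iff (hG.trans_le h)).2 h
  rw [alphaInd, hadm, csInf_Ici]

/-- Theorem 10.2: If `S ⊆ B_n` is a nondegenerate simplex, then
`α(B_n;S) ≥ n`, with equality iff `S` is a regular simplex inscribed into `B_n`. -/
theorem alpha_ball_ge_dim (n : ℕ) (hn : 0 < n)
    (v : Fin (n + 1) → EuclideanSpace ℝ (Fin n)) (hv : AffineIndependent ℝ v)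
    (hsub : simplexSet v ⊆ unitBall n) :
    (n : ℝ) ≤ alphaInd (unitBall n) v ∧
    (alphaInd (unitBall n) v = n ↔
      (∃ e : ℝ, ∀ j k, j ≠ k → dist (v j) (v k) = e) ∧ ∀ j, ‖v j‖ = 1) := by
  have : Nontrivial (Fin (n + 1)) := Fin.nontrivial_iff_two_le.2 (by omega)
  have hvert : ∀ j, ‖simplexBasis hv j‖ ≤ 1 := fun j => by
    simpa [unitBall] using hsub (subset_convexHull ℝ _ (Set.mem_range_self j))
  have hcard : (Fintype.card (Fin (n + 1)) : ℝ) - 1 = n := by simp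
  rw [alphaInd_unitBall_eq hn hv, ← hcard]
  exact ⟨AffineBasis.card_sub_one_le_sum_norm_coordGrad hvert,
    AffineBasis.sum_norm_coordGrad_eq_card_sub_one_iff_regular hvert⟩
end
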